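/- arXiv:2205.12618 — 8 statements merged into one kernel-verified Lean document; each statement's English description precedes it below -/
import Mathlib

section
/- Let R⁺ and R⁻ be sets of duples over constants C, and r a duple. Suppose every join-semilattice interpretation that satisfies all duples of R⁺ positively and all duples of R⁻ negatively also satisfies r positively. Then either there is no interpretation satisfying R⁺ positively, R⁻ negatively and r positively, or already every interpretation satisfying R⁺ positively satisfies r positively. -/
/-- A duple over the constants `C`: an ordered pair of nonempty finite sets. -/
structure Duple (C : Type) where
  l : Finset C
  r : Finset C
  hl : l.Nonempty
  hr : r.Nonempty

/-- A join-semilattice interpretation `f : C → S` satisfies the duple `d`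
positively when the sup of `f` over the left term is below that over the right. -/
def SatD {C S : Type} [SemilatticeSup S] (f : C → S) (d : Duple C) : Prop :=
  d.l.sup' d.hl f ≤ d.r.sup' d.hr f

private lemma sup'_pair {C S T : Type} [SemilatticeSup S] [SemilatticeSup T]
    (s : Finset C) (hs : s.Nonempty) (g : C → S) (k : C → T) :
    s.sup' hs (fun c => (g c, k c)) = (s.sup' hs g, s.sup' hs k) := by
  apply le_antisymm
  · exact Finset.sup'_le _ _ fun c hc => ⟨Finset.le_sup' g hc, Finset.le_sup' k hc⟩
  · refine ⟨Finset.sup'_le hs _ fun c hc => ?_, Finset.sup'_le hs _ fun c hc => ?_⟩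
    · exact (Finset.le_sup' (fun c => (g c, k c)) hc).1
    · exact (Finset.le_sup' (fun c => (g c, k c)) hc).2

private lemma satD_pair {C S T : Type} [SemilatticeSup S] [SemilatticeSup T]
    (g : C → S) (k : C → T) (d : Duple C) :
    SatD (fun c => (g c, k c)) d ↔ SatD g d ∧ SatD k d := by
  simp [SatD, sup'_pair, Prod.le_def]

/-- if `R⁺ ∧ R⁻ ⊢ r⁺`, then either `R⁺ ∪ R⁻ ∪ {r⁺}` has no model,
or already `R⁺ ⊢ r⁺`. -/
theorem segregation_positive
    {C : Type} (Rp Rm : Set (Duple C)) (r : Duple C)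
    (h : ∀ (S : Type) [SemilatticeSup S] (f : C → S),
        (∀ d ∈ Rp, SatD f d) → (∀ d ∈ Rm, ¬ SatD f d) → SatD f r) :
    (¬ ∃ (S : Type) (_ : SemilatticeSup S) (f : C → S),
        (∀ d ∈ Rp, SatD f d) ∧ (∀ d ∈ Rm, ¬ SatD f d) ∧ SatD f r) ∨
    (∀ (S : Type) [SemilatticeSup S] (f : C → S),
        (∀ d ∈ Rp, SatD f d) → SatD f r) := by
  by_cases hex : ∃ (S : Type) (_ : SemilatticeSup S) (f : C → S),
      (∀ d ∈ Rp, SatD f d) ∧ (∀ d ∈ Rm, ¬ SatD f d) ∧ SatD f r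
  · right
    obtain ⟨T, _, g, hgp, hgm, _⟩ := hex
    intro S _ f hfp
    have hpair := h (S × T) (fun c => (f c, g c))
      (fun d hd => (satD_pair f g d).2 ⟨hfp d hd, hgp d hd⟩)
      (fun d hd hs => hgm d hd ((satD_pair f g d).1 hs).2)
    exact ((satD_pair f g r).1 hpair).1
  · exact Or.inl hex
end

section
/- Let R⁺ be a set of duples, R⁻ a finite set of duples, and s a duple over constants C. If every join-semilattice interpretation satisfying all duples of R⁺ positively and all duples of R⁻ negatively satisfies s negatively, then there exists a single duple t ∈ R⁻ such that every interpretation satisfying all of R⁺ positively and t negatively satisfies s negatively. -/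
/-- if `R⁺ ∧ R⁻ ⊢ s⁻` with `R⁻` finite, then some single
`t ∈ R⁻` already satisfies `R⁺ ∧ t⁻ ⊢ s⁻`. -/
theorem segregation_negative
    {C : Type} (Rp : Set (Duple C)) (Rm : Finset (Duple C)) (s : Duple C)
    (h : ∀ (S : Type) [SemilatticeSup S] (f : C → S),
        (∀ d ∈ Rp, SatD f d) → (∀ d ∈ Rm, ¬ SatD f d) → ¬ SatD f s) :
    ∃ t ∈ Rm, ∀ (S : Type) [SemilatticeSup S] (f : C → S),
        (∀ d ∈ Rp, SatD f d) → ¬ SatD f t → ¬ SatD f s := by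
  by_contra hc
  push_neg at hc
  -- For each t ∈ Rm, extract a witnessing model
  have hc' : ∀ t : {x // x ∈ Rm}, ∃ (S : Type) (_ : SemilatticeSup S) (f : C → S),
      (∀ d ∈ Rp, SatD f d) ∧ ¬ SatD f t.1 ∧ SatD f s := by
    intro t
    obtain ⟨S, inst, f, hp, hn, hs⟩ := hc t.1 t.2
    exact ⟨S, inst, f, hp, hn, hs⟩
  choose S inst f hp hn hs using hc'
  letI : ∀ t : {x // x ∈ Rm}, SemilatticeSup (S t) := inst
  rcases Rm.eq_empty_or_nonempty with hRm | hRm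
  · -- Rm empty: trivial one-point (constant) model contradicts h
    have := h ℕ (fun _ => 0)
      (by intro d _; simp [SatD, Finset.sup'_const])
      (by intro d hd; simp [hRm] at hd)
    exact this (by simp [SatD, Finset.sup'_const])
  · -- Rm nonempty: use product model
    set F : C → (∀ t : {x // x ∈ Rm}, S t) := fun c t => f t c with hF
    have key : ∀ (d : Duple C), SatD F d ↔ ∀ t, SatD (f t) d := by
      intro d
      constructor
      · intro hsat t
        have := hsat t
        simpa [SatD, Finset.sup'_apply] using this
      · intro hall
        intro t
        simpa [SatD, Finset.sup'_apply] using hall t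
    refine h _ F ?_ ?_ ((key s).mpr fun t => hs t)
    · intro d hd
      exact (key d).mpr fun t => hp t d hd
    · intro d hd hsat
      exact hn ⟨d, hd⟩ ((key d).mp hsat ⟨d, hd⟩)
end

section
/- Let A be an atomization over C and r = (r_L, r_R) a duple. Then the full crossing □_r A satisfies the positive duple r, i.e. every atom of □_r A meeting r_L also meets r_R. -/
/-- An atomization `A` satisfies the duple `(a, b)` positively if every atom
meeting `a` also meets `b`. -/
def SatPos {C : Type} (A : Set (Set C)) (a b : Finset C) : Prop :=
  ∀ U ∈ A, (U ∩ (a : Set C)).Nonempty → (U ∩ (b : Set C)).Nonempty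

/-- The discriminant of the duple `(rL, rR)` in `A`: the atoms meeting `rL`
and disjoint from `rR`. -/
def dis {C : Type} (A : Set (Set C)) (rL rR : Finset C) : Set (Set C) :=
  {U ∈ A | (U ∩ (rL : Set C)).Nonempty ∧ U ∩ (rR : Set C) = ∅}

/-- The lower atomic segment of the term `rR` in `A`: the atoms meeting `rR`. -/
def low {C : Type} (A : Set (Set C)) (rR : Finset C) : Set (Set C) :=
  {V ∈ A | (V ∩ (rR : Set C)).Nonempty}

/-- Full crossing of the duple `(rL, rR)` over the atomization `A`. -/
def cross {C : Type} (A : Set (Set C)) (rL rR : Finset C) : Set (Set C) :=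
  (A \ dis A rL rR) ∪ {W | ∃ U ∈ dis A rL rR, ∃ V ∈ low A rR, W = U ∪ V}

/-- the full crossing `□_r A` satisfies the positive duple `r`. -/
theorem cross_satisfies_duple
    {C : Type} (A : Set (Set C)) (hA : ∀ U ∈ A, U.Nonempty)
    (rL rR : Finset C) (hrL : rL.Nonempty) (hrR : rR.Nonempty) :
    SatPos (cross A rL rR) rL rR := by
  rintro W (⟨hWA, hWd⟩ | ⟨U, hU, V, ⟨hVA, hVR⟩, rfl⟩) hmeet
  · by_contra hne
    exact hWd ⟨hWA, hmeet, Set.not_nonempty_iff_eq_empty.mp hne⟩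
  · obtain ⟨x, hxV, hxR⟩ := hVR
    exact ⟨x, Or.inr hxV, hxR⟩
end

section
/- Full crossing produces a less free model: for any atomization A over C, any duple r, and any duple s, if A satisfies s positively then □_r A satisfies s positively. -/
/-- full crossing produces a less free model: every positive
duple satisfied by `A` is satisfied by `□_r A`. -/
theorem cross_less_free
    {C : Type} (A : Set (Set C)) (hA : ∀ U ∈ A, U.Nonempty)
    (rL rR : Finset C) (hrL : rL.Nonempty) (hrR : rR.Nonempty)
    (sL sR : Finset C) (hsL : sL.Nonempty) (hsR : sR.Nonempty)
    (h : SatPos A sL sR) : SatPos (cross A rL rR) sL sR := by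
  intro W hW hWL
  rcases hW with hW | ⟨U, hU, V, hV, rfl⟩
  · exact h W hW.1 hWL
  · have hU' := hU.1
    have hV' := hV.1
    rcases hWL with ⟨x, hx, hxL⟩
    rcases hx with hx | hx
    · rcases h U hU' ⟨x, hx, hxL⟩ with ⟨y, hy, hyR⟩
      exact ⟨y, Or.inl hy, hyR⟩
    · rcases h V hV' ⟨x, hx, hxL⟩ with ⟨y, hy, hyR⟩
      exact ⟨y, Or.inr hy, hyR⟩
end

section
/- Let A be an atomization over C and r = (r_L, r_R), s = (s_L, s_R) duples. Suppose A satisfies s negatively but □_r A satisfies s positively. Then A satisfies positively both the duple (r_R, s_R) and the duple (s_L, s_R ∪ r_L). -/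
/-- if `A ⊨ s⁻` but `□_r A ⊨ s⁺`, then `A` satisfies positively
both `(r_R, s_R)` and `(s_L, s_R ∪ r_L)`. -/
theorem cross_inference_forward
    {C : Type} [DecidableEq C] (A : Set (Set C)) (hA : ∀ U ∈ A, U.Nonempty)
    (rL rR : Finset C) (hrL : rL.Nonempty) (hrR : rR.Nonempty)
    (sL sR : Finset C) (hsL : sL.Nonempty) (hsR : sR.Nonempty)
    (hneg : ¬ SatPos A sL sR) (hpos : SatPos (cross A rL rR) sL sR) :
    SatPos A rR sR ∧ SatPos A sL (sR ∪ rL) := by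
  simp only [SatPos, not_forall] at hneg
  obtain ⟨W, hWA, hWsL, hWsR⟩ := hneg
  have hWsR' : W ∩ (sR : Set C) = ∅ := Set.not_nonempty_iff_eq_empty.mp hWsR
  have hWdis : W ∈ dis A rL rR := by
    by_contra hWd
    exact hWsR (hpos W (Or.inl ⟨hWA, hWd⟩) hWsL)
  constructor
  · intro U hU hUrR
    have hUlow : U ∈ low A rR := ⟨hU, hUrR⟩
    have hWU : W ∪ U ∈ cross A rL rR := Or.inr ⟨W, hWdis, U, hUlow, rfl⟩
    have h1 : ((W ∪ U) ∩ (sL : Set C)).Nonempty := by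
      obtain ⟨x, hx1, hx2⟩ := hWsL
      exact ⟨x, Or.inl hx1, hx2⟩
    obtain ⟨x, hx1, hx2⟩ := hpos _ hWU h1
    rcases hx1 with h | h
    · exact absurd (Set.mem_inter h hx2) (by simp [hWsR'] )
    · exact ⟨x, h, hx2⟩
  · intro U hU hUsL
    by_cases hUrL : (U ∩ (rL : Set C)).Nonempty
    · obtain ⟨x, hx1, hx2⟩ := hUrL
      exact ⟨x, hx1, by simpa using Or.inr hx2⟩
    · have hUd : U ∉ dis A rL rR := fun h => hUrL h.2.1
      obtain ⟨x, hx1, hx2⟩ := hpos U (Or.inl ⟨hU, hUd⟩) hUsL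
      exact ⟨x, hx1, by simpa using Or.inl hx2⟩
end

section
/- Let A be an atomization over C and r = (r_L, r_R), s = (s_L, s_R) duples. If A satisfies positively both (r_R, s_R) and (s_L, s_R ∪ r_L), then □_r A satisfies s positively. -/
/-- if `A` satisfies positively both `(r_R, s_R)` and
`(s_L, s_R ∪ r_L)`, then `□_r A` satisfies `s` positively. -/
theorem cross_inference_backward
    {C : Type} [DecidableEq C] (A : Set (Set C)) (hA : ∀ U ∈ A, U.Nonempty)
    (rL rR : Finset C) (hrL : rL.Nonempty) (hrR : rR.Nonempty)
    (sL sR : Finset C) (hsL : sL.Nonempty) (hsR : sR.Nonempty)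
    (h1 : SatPos A rR sR) (h2 : SatPos A sL (sR ∪ rL)) :
    SatPos (cross A rL rR) sL sR := by
  intro W hW hWsL
  rcases hW with ⟨hWA, hWnd⟩ | ⟨U, hU, V, hV, rfl⟩
  · have hW2 := h2 W hWA hWsL
    rcases hW2 with ⟨x, hxW, hxs⟩
    rw [Finset.coe_union] at hxs
    rcases hxs with hx | hx
    · exact ⟨x, hxW, hx⟩
    · -- W meets rL, W ∉ dis, so W ∩ rR ≠ ∅
      have hrRne : (W ∩ (rR : Set C)).Nonempty := by
        by_contra h
        exact hWnd ⟨hWA, ⟨x, hxW, hx⟩, Set.not_nonempty_iff_eq_empty.mp h⟩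
      exact h1 W hWA hrRne
  · have hVsR := h1 V hV.1 hV.2
    rcases hVsR with ⟨x, hxV, hxs⟩
    exact ⟨x, Or.inr hxV, hxs⟩
end

section
/- Grounding and full crossing commute: for K ⊆ C, an atomization A over C, and a duple r over K, one has □_r (A^∨K) = (□_r A)^∨K as sets of atoms. -/
/-- The grounding of the atomization `A` to `K`: the atoms whose upper
constant segment is contained in `K`. -/
def ground {C : Type} (A : Set (Set C)) (K : Set C) : Set (Set C) :=
  {U ∈ A | U ⊆ K}

/-- grounding and full crossing commute for duples over `K`. -/
theorem cross_ground_comm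
    {C : Type} (K : Set C) (A : Set (Set C)) (hA : ∀ U ∈ A, U.Nonempty)
    (rL rR : Finset C) (hrL : rL.Nonempty) (hrR : rR.Nonempty)
    (hrLK : (rL : Set C) ⊆ K) (hrRK : (rR : Set C) ⊆ K) :
    cross (ground A K) rL rR = ground (cross A rL rR) K := by
  ext W
  simp only [cross, ground, dis, low, Set.mem_union, Set.mem_diff, Set.mem_setOf_eq,
    Set.mem_sep_iff]
  constructor
  · rintro (⟨⟨hWA, hWK⟩, hnd⟩ | ⟨U, ⟨⟨hUA, hUK⟩, hUd⟩, V, ⟨⟨hVA, hVK⟩, hVR⟩, rfl⟩)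
    · refine ⟨Or.inl ⟨hWA, fun hd => hnd ⟨⟨hWA, hWK⟩, hd.2⟩⟩, hWK⟩
    · exact ⟨Or.inr ⟨U, ⟨hUA, hUd⟩, V, ⟨hVA, hVR⟩, rfl⟩, Set.union_subset hUK hVK⟩
  · rintro ⟨(⟨hWA, hnd⟩ | ⟨U, ⟨hUA, hUd⟩, V, ⟨hVA, hVR⟩, rfl⟩), hWK⟩
    · exact Or.inl ⟨⟨hWA, hWK⟩, fun h => hnd ⟨hWA, h.2⟩⟩
    · have hUK : U ⊆ K := (Set.union_subset_iff.mp hWK).1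
      have hVK : V ⊆ K := (Set.union_subset_iff.mp hWK).2
      exact Or.inr ⟨U, ⟨⟨hUA, hUK⟩, hUd⟩, V, ⟨⟨hVA, hVK⟩, hVR⟩, rfl⟩
end

section
/- Irreducible models are small: let A be an atomization over a nonempty set C and R⁻ a finite set of duples such that A satisfies every duple of R⁻ negatively. Then there is a subset A' ⊆ A with |A'| ≤ |R⁻| such that the atomization A' ∪ {C} still satisfies every duple of R⁻ negatively, satisfies every positive duple that A satisfies, and has an atom below every constant (every c ∈ C lies in some atom of A' ∪ {C}). In particular R⁻ together with the positive theory of A has a model with at most |R⁻| + 1 atoms. -/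
/-- An atomization `A` satisfies the duple `(a, b)` negatively if some atom
meets `a` and is disjoint from `b`. -/
def SatNeg {C : Type} (A : Set (Set C)) (a b : Finset C) : Prop :=
  ∃ U ∈ A, (U ∩ (a : Set C)).Nonempty ∧ U ∩ (b : Set C) = ∅

/-- irreducible models are small.  If `A` satisfies every duple
of the finite set `R⁻` negatively, there is a subset `A' ⊆ A` with at most
`|R⁻|` atoms such that `A' ∪ {C}` (adding the atom whose upper segment is all
of `C`) still satisfies `R⁻` negatively, satisfies every positive duple that
`A` satisfies, and has an atom below every constant; in particular it has at
most `|R⁻| + 1` atoms. -/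
theorem irreducible_models_small
    {C : Type} [Nonempty C] (A : Set (Set C)) (hA : ∀ U ∈ A, U.Nonempty)
    (Rm : Finset (Duple C)) (hneg : ∀ d ∈ Rm, SatNeg A d.l d.r) :
    ∃ A' : Finset (Set C), (↑A' : Set (Set C)) ⊆ A ∧ A'.card ≤ Rm.card ∧
      (∀ d ∈ Rm, SatNeg ((↑A' : Set (Set C)) ∪ {Set.univ}) d.l d.r) ∧
      (∀ (a b : Finset C), a.Nonempty → b.Nonempty →
        SatPos A a b → SatPos ((↑A' : Set (Set C)) ∪ {Set.univ}) a b) ∧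
      (∀ c : C, ∃ U ∈ ((↑A' : Set (Set C)) ∪ {Set.univ}), c ∈ U) := by
  classical
  choose f hfA hfa hfb using fun d hd => hneg d hd
  refine ⟨Rm.attach.image (fun d => f d.1 d.2), ?_, ?_, ?_, ?_, ?_⟩
  · intro U hU
    simp only [Finset.coe_image, Set.mem_image, Finset.mem_coe, Finset.mem_attach] at hU
    obtain ⟨d, -, rfl⟩ := hU
    exact hfA d.1 d.2
  · exact (Finset.card_image_le).trans (by simp)
  · intro d hd
    exact ⟨f d hd, Or.inl (by simp; exact ⟨d, hd, rfl⟩), hfa d hd, hfb d hd⟩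
  · intro a b ha hb hpos U hU hUa
    rcases hU with hU | hU
    · simp only [Finset.coe_image, Set.mem_image, Finset.mem_coe, Finset.mem_attach] at hU
      obtain ⟨d, -, rfl⟩ := hU
      exact hpos _ (hfA d.1 d.2) hUa
    · rcases hb with ⟨x, hx⟩
      simp only [Set.mem_singleton_iff] at hU
      subst hU
      exact ⟨x, trivial, by simpa using hx⟩
  · intro c
    exact ⟨Set.univ, Or.inr rfl, trivial⟩
end
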